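/- Let R be a commutative ring with 1 and define a τ_z b iff ab = 0 on R^#. Then R is a τ_z-atomic-associate-UFR if and only if R is an integral domain or R is isomorphic to a direct product of two fields. -/

import Mathlib

universe u

variable {R : Type u} [CommRing R]

/-- `a ∈ R^#`, i.e. `a` is a nonzero nonunit of `R`. -/
def IsNnu (a : R) : Prop :=
  a ≠ 0 ∧ ¬IsUnit a

/-- `a ∼ b` iff `(a) = (b)`. -/
def RAssoc (a b : R) : Prop :=
  Ideal.span ({a} : Set R) = Ideal.span ({b} : Set R)

/-- `a ≈ b` iff `a = λ * b` for some unit `λ`. -/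
def RSAssoc (a b : R) : Prop :=
  ∃ lam : Rˣ, a = (lam : R) * b

/-- `a ≅ b` iff `a ∼ b` and (`a = b = 0`, or whenever `a = r * b` then `r` is a unit). -/
def RVSAssoc (a b : R) : Prop :=
  RAssoc a b ∧ ((a = 0 ∧ b = 0) ∨ ∀ r : R, a = r * b → IsUnit r)

/-- `a = u * a₁ ⋯ aₙ` (with `l = [a₁, …, aₙ]`) is a `τ`-factorization of `a`:
the list of factors is nonempty, all factors are nonunits, all factors are nonzero
except in the trivial `τ`-factorization `0 = u * 0` of `0`, and the factors are
pairwise related by `τ`. -/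
def IsTauFact (τ : R → R → Prop) (u : Rˣ) (l : List R) (a : R) : Prop :=
  l ≠ [] ∧ (∀ x ∈ l, ¬IsUnit x) ∧ (∀ x ∈ l, x = 0 → l = [0]) ∧
    l.Pairwise τ ∧ a = (u : R) * l.prod

/-- `b` τ-divides `a`, i.e. `b` occurs as a factor in some τ-factorization of `a`. -/
def TauDvd (τ : R → R → Prop) (b a : R) : Prop :=
  ∃ (u : Rˣ) (l : List R), IsTauFact τ u l a ∧ b ∈ l

/-- `a` is τ-irreducible: `a` is a nonunit and every τ-factorization of `a`
has a factor `∼ a`. -/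
def TauIrreducible (τ : R → R → Prop) (a : R) : Prop :=
  ¬IsUnit a ∧ ∀ (u : Rˣ) (l : List R), IsTauFact τ u l a → ∃ x ∈ l, RAssoc a x

/-- `a` is τ-strongly irreducible: `a` is a nonunit and every τ-factorization of `a`
has a factor `≈ a`. -/
def TauSIrreducible (τ : R → R → Prop) (a : R) : Prop :=
  ¬IsUnit a ∧ ∀ (u : Rˣ) (l : List R), IsTauFact τ u l a → ∃ x ∈ l, RSAssoc a x

/-- `a` is τ-m-irreducible: `a` is a nonunit and in every τ-factorization of `a`
every factor is `∼ a`. -/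
def TauMIrreducible (τ : R → R → Prop) (a : R) : Prop :=
  ¬IsUnit a ∧ ∀ (u : Rˣ) (l : List R), IsTauFact τ u l a → ∀ x ∈ l, RAssoc a x

/-- `a` is τ-very strongly irreducible: `a` is a nonunit, `a ≅ a`, and `a` has
no nontrivial τ-factorizations. -/
def TauVSIrreducible (τ : R → R → Prop) (a : R) : Prop :=
  ¬IsUnit a ∧ RVSAssoc a a ∧ ∀ (u : Rˣ) (l : List R), IsTauFact τ u l a → l.length = 1

/-- `R` is τ-atomic: every nonunit has a τ-factorization into τ-irreducible factors. -/
def TauAtomic (τ : R → R → Prop) : Prop :=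
  ∀ a : R, ¬IsUnit a → ∃ (u : Rˣ) (l : List R),
    IsTauFact τ u l a ∧ ∀ x ∈ l, TauIrreducible τ x

/-- `τ` is refinable: replacing each factor of a τ-factorization by the factors of a
τ-factorization of it (absorbing the units into the leading unit) again yields a
τ-factorization. -/
def TauRefinable (τ : R → R → Prop) : Prop :=
  ∀ (a : R) (u : Rˣ) (l : List R), IsTauFact τ u l a →
    ∀ L : List (Rˣ × List R),
      List.Forall₂ (fun x p => IsTauFact τ p.1 p.2 x) l L →
      IsTauFact τ (u * (L.map Prod.fst).prod) (L.map Prod.snd).flatten a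

/-- `τ` is associate preserving. -/
def TauAssocPreserving (τ : R → R → Prop) : Prop :=
  ∀ a b b' : R, IsNnu b' → RAssoc b b' → τ a b → τ a b'

/-- `R` satisfies τ-ACCP: every ascending chain of principal ideals
`(a₀) ⊆ (a₁) ⊆ ⋯` with `a_{i+1} |_τ a_i` stabilizes. -/
def TauACCP (τ : R → R → Prop) : Prop :=
  ∀ f : ℕ → R,
    (∀ i, Ideal.span ({f i} : Set R) ≤ Ideal.span ({f (i + 1)} : Set R)) →
    (∀ i, TauDvd τ (f (i + 1)) (f i)) →
    ∃ N : ℕ, ∀ i, N ≤ i → Ideal.span ({f i} : Set R) = Ideal.span ({f N} : Set R)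

/-!
A product of at least two pairwise annihilating factors is `0`, so a nonzero nonunit only has
the trivial τ_z-factorization and is τ_z-irreducible: everything is decided by the
τ_z-factorizations of `0`. Comparing them through their multisets of principal ideals:

* In a domain, `0 = 0` is the only one. In `K₁ × K₂` every nonzero nonunit is associate to
  `e = (1, 0)` or to `1 - e`, and two factors annihilating each other cannot be associate to the
  same idempotent; so every τ_z-atomic factorization of `0` is `e · (1 - e)` up to order and `∼`.
* If `R` is not a domain, pick `a * b = 0` with `a, b ≠ 0`. Comparing `0 = c·c` with `0 = c·c·c`
  shows `c² ≠ 0` for every nonzero nonunit `c`, and comparing `0 = a²·b` with `0 = a·b` forces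
  `(a²) = (a)`. Writing `a = a² s`, `e = a s` is an idempotent other than `0, 1`; the ideals `(e)`
  and `(1 - e)` turn out to be maximal, so `R ≅ R/(e) × R/(1 - e)` is a product of two fields.
-/

notation "τ_z" => fun x y => x * y = 0

theorem rAssoc_iff_dvd_dvd {a b : R} : RAssoc a b ↔ a ∣ b ∧ b ∣ a := by
  rw [RAssoc, le_antisymm_iff, Ideal.span_singleton_le_span_singleton,
    Ideal.span_singleton_le_span_singleton, and_comm]

theorem rAssoc_zero_left {a : R} : RAssoc 0 a ↔ a = 0 := by
  rw [RAssoc, Set.singleton_zero, Ideal.span_zero, eq_comm, Ideal.span_singleton_eq_bot]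

theorem rAssoc_of_mul_eq {x y e : R} (hex : e * x = x) (hxy : x * y = e) : RAssoc x e :=
  rAssoc_iff_dvd_dvd.2 ⟨⟨y, hxy.symm⟩, ⟨x, hex.symm⟩⟩

theorem rAssoc_map_iff {S : Type*} [CommRing S] (f : R ≃+* S) {a b : R} :
    RAssoc (f a) (f b) ↔ RAssoc a b := by
  simp only [rAssoc_iff_dvd_dvd, map_dvd_iff]

theorem isNnu_map_iff {S : Type*} [CommRing S] (f : R ≃+* S) {a : R} :
    IsNnu (f a) ↔ IsNnu a := by
  simp only [IsNnu, map_ne_zero_iff f f.injective, isUnit_map_iff]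

theorem isNnu_of_mul_eq_zero {a b : R} (ha : a ≠ 0) (hb : b ≠ 0) (hab : a * b = 0) :
    IsNnu a :=
  ⟨ha, fun hu => hb (hu.mul_right_eq_zero.1 hab)⟩

theorem mul_ne_zero_of_rAssoc_of_isIdempotentElem {e x y : R} (he : IsIdempotentElem e)
    (hx : RAssoc x e) (hy : RAssoc y e) (hy0 : y ≠ 0) : x * y ≠ 0 := by
  intro hxy
  obtain ⟨⟨c, hc⟩, -⟩ := rAssoc_iff_dvd_dvd.1 hx
  obtain ⟨-, d, hd⟩ := rAssoc_iff_dvd_dvd.1 hy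
  apply hy0
  calc y = e * (e * d) := by rw [← mul_assoc, he.eq, hd]
    _ = c * (x * y) := by rw [← hd, hc]; ring
    _ = 0 := by rw [hxy, mul_zero]

theorem isTauFact_singleton (τ : R → R → Prop) {a : R} (ha : ¬IsUnit a) :
    IsTauFact τ 1 [a] a :=
  ⟨List.cons_ne_nil a [], by simpa using ha, by simp, List.pairwise_singleton τ a, by simp⟩

theorem prod_eq_zero_of_pairwise_mul_eq_zero {l : List R} (hl : l.Pairwise τ_z)
    (h2 : 2 ≤ l.length) : l.prod = 0 := by
  match l, hl with
  | x :: y :: _, hl =>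
    rw [List.prod_cons, List.prod_cons, ← mul_assoc, List.rel_of_pairwise_cons hl (by simp),
      zero_mul]

theorem eq_singleton_of_isTauFact_of_ne_zero {a : R} (ha : a ≠ 0) {u : Rˣ} {l : List R}
    (hl : IsTauFact τ_z u l a) : ∃ b, l = [b] ∧ RAssoc a b := by
  obtain ⟨hne, -, -, hp, rfl⟩ := hl
  match l, hne with
  | [b], _ =>
    refine ⟨b, rfl, ?_⟩
    rw [List.prod_singleton]
    exact Ideal.span_singleton_mul_left_unit u.isUnit b
  | _ :: _ :: _, _ =>
    exact absurd (by rw [prod_eq_zero_of_pairwise_mul_eq_zero hp (by simp), mul_zero]) ha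

theorem tauIrreducible_of_ne_zero {a : R} (ha : a ≠ 0) (hu : ¬IsUnit a) :
    TauIrreducible τ_z a :=
  ⟨hu, fun _ _ hl => by
    obtain ⟨b, rfl, hab⟩ := eq_singleton_of_isTauFact_of_ne_zero ha hl
    exact ⟨b, List.mem_singleton_self b, hab⟩⟩

theorem tauAtomic_tauZ : TauAtomic (τ_z : R → R → Prop) := by
  intro a ha
  by_cases h : a ≠ 0 ∨ TauIrreducible τ_z a
  · refine ⟨1, [a], isTauFact_singleton _ ha, ?_⟩
    simpa using h.elim (tauIrreducible_of_ne_zero · ha) id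
  push Not at h
  obtain ⟨rfl, h0⟩ := h
  obtain ⟨u, l, hl, hl0⟩ :
      ∃ (u : Rˣ) (l : List R), IsTauFact τ_z u l 0 ∧ ∀ x ∈ l, ¬RAssoc 0 x := by
    simpa [TauIrreducible, ha] using h0
  exact ⟨u, l, hl, fun x hx =>
    tauIrreducible_of_ne_zero (fun hx0 => hl0 x hx (rAssoc_zero_left.2 hx0)) (hl.2.1 x hx)⟩

theorem eq_singleton_zero_of_isTauFact_zero [IsDomain R] {u : Rˣ} {l : List R}
    (hl : IsTauFact τ_z u l 0) : l = [0] := by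
  obtain ⟨-, -, hz, -, h⟩ := hl
  exact hz 0 (List.prod_eq_zero_iff.1 ((Units.mul_right_eq_zero u).1 h.symm)) rfl

def spanMultiset (l : List R) : Multiset (Ideal R) :=
  (l : Multiset R).map fun a => Ideal.span {a}

theorem rel_rAssoc_iff_spanMultiset_eq {l l' : List R} :
    Multiset.Rel RAssoc (l : Multiset R) l' ↔ spanMultiset l = spanMultiset l' := by
  rw [spanMultiset, spanMultiset, ← Multiset.rel_eq, Multiset.rel_map]
  rfl

theorem spanMultiset_eq_of_isTauFact_of_ne_zero {a : R} (ha : a ≠ 0) {u : Rˣ} {l : List R}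
    (hl : IsTauFact τ_z u l a) : spanMultiset l = {Ideal.span {a}} := by
  obtain ⟨b, rfl, hab⟩ := eq_singleton_of_isTauFact_of_ne_zero ha hl
  simpa [spanMultiset] using hab.symm

structure IsAnnihilatingFactorization (l : List R) : Prop where
  two_le_length : 2 ≤ l.length
  isNnu : ∀ x ∈ l, IsNnu x
  pairwise : l.Pairwise τ_z

namespace IsAnnihilatingFactorization

variable {l : List R}

theorem pair {x y : R} (hx : IsNnu x) (hy : IsNnu y) (hxy : x * y = 0) :
    IsAnnihilatingFactorization [x, y] :=
  ⟨le_rfl, by simp [hx, hy], by simp [hxy]⟩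

theorem isTauFact (hl : IsAnnihilatingFactorization l) : IsTauFact τ_z 1 l 0 :=
  ⟨List.ne_nil_of_length_pos (by linarith [hl.two_le_length]), fun x hx => (hl.isNnu x hx).2,
    fun x hx hx0 => absurd hx0 (hl.isNnu x hx).1, hl.pairwise,
    by rw [prod_eq_zero_of_pairwise_mul_eq_zero hl.pairwise hl.two_le_length, mul_zero]⟩

theorem tauIrreducible (hl : IsAnnihilatingFactorization l) :
    ∀ x ∈ l, TauIrreducible τ_z x :=
  fun x hx => tauIrreducible_of_ne_zero (hl.isNnu x hx).1 (hl.isNnu x hx).2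

theorem not_tauIrreducible_zero (hl : IsAnnihilatingFactorization l) :
    ¬TauIrreducible τ_z (0 : R) := fun h =>
  let ⟨x, hx, h0⟩ := h.2 1 l hl.isTauFact
  (hl.isNnu x hx).1 (rAssoc_zero_left.1 h0)

theorem of_isTauFact_zero {u : Rˣ} (hl : IsTauFact τ_z u l 0)
    (hirr : ∀ x ∈ l, TauIrreducible τ_z x) (h0 : ¬TauIrreducible τ_z (0 : R)) :
    IsAnnihilatingFactorization l := by
  obtain ⟨hnil, hnu, hz, hp, h⟩ := hl
  have hne : ∀ x ∈ l, x ≠ 0 := fun x hx hx0 => h0 (hirr 0 (by simp [hz x hx hx0]))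
  refine ⟨?_, fun x hx => ⟨hne x hx, hnu x hx⟩, hp⟩
  rcases l with _ | ⟨x, _ | ⟨y, l⟩⟩
  · exact absurd rfl hnil
  · exact absurd (by simpa using h.symm) (hne x (by simp))
  · simp

theorem spanMultiset_eq (hl : IsAnnihilatingFactorization l) {e : R}
    (he : IsIdempotentElem e) (hcls : ∀ x, IsNnu x → RAssoc x e ∨ RAssoc x (1 - e)) :
    spanMultiset l = {Ideal.span {e}, Ideal.span {1 - e}} := by
  have hsub : spanMultiset l ⊆ {Ideal.span {e}, Ideal.span {1 - e}} := by
    intro I hI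
    obtain ⟨x, hx, rfl⟩ := Multiset.mem_map.1 hI
    simpa [RAssoc] using hcls x (hl.isNnu x hx)
  have hnodup : (spanMultiset l).Nodup := by
    rw [spanMultiset, Multiset.map_coe, Multiset.coe_nodup, List.Nodup, List.pairwise_map]
    refine hl.pairwise.imp_of_mem fun hx hy hxy hspan => ?_
    have hy0 := (hl.isNnu _ hy).1
    rcases hcls _ (hl.isNnu _ hx) with h | h
    · exact mul_ne_zero_of_rAssoc_of_isIdempotentElem he h (hspan.symm.trans h) hy0 hxy
    · exact mul_ne_zero_of_rAssoc_of_isIdempotentElem he.one_sub h (hspan.symm.trans h) hy0 hxy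
  exact Multiset.eq_of_le_of_card_le ((Multiset.le_iff_subset hnodup).2 hsub)
    (by simpa [spanMultiset] using hl.two_le_length)

end IsAnnihilatingFactorization

variable (R) in
def HasUniqueAnnihilatingFactorizations : Prop :=
  ∀ l l' : List R, IsAnnihilatingFactorization l → IsAnnihilatingFactorization l' →
    spanMultiset l = spanMultiset l'

namespace HasUniqueAnnihilatingFactorizations

theorem span_mem_spanMultiset (H : HasUniqueAnnihilatingFactorizations R) {l l' : List R}
    (hl : IsAnnihilatingFactorization l) (hl' : IsAnnihilatingFactorization l') {x : R}
    (hx : x ∈ l) : Ideal.span {x} ∈ spanMultiset l' :=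
  H l l' hl hl' ▸ Multiset.mem_map_of_mem _ hx

theorem mul_self_ne_zero (H : HasUniqueAnnihilatingFactorizations R) {c : R} (hc : IsNnu c) :
    c * c ≠ 0 := fun hcc => by
  have := congrArg Multiset.card
    (H [c, c] [c, c, c] (.pair hc hc hcc) ⟨by simp, by simp [hc], by simp [hcc]⟩)
  simp [spanMultiset] at this

theorem span_mul_self_eq (H : HasUniqueAnnihilatingFactorizations R) {a b : R}
    (ha : IsNnu a) (hb : IsNnu b) (hab : a * b = 0) :
    Ideal.span {a * a} = Ideal.span {a} := by
  have haa : IsNnu (a * a) :=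
    ⟨H.mul_self_ne_zero ha, fun h => ha.2 (isUnit_of_mul_isUnit_left h)⟩
  have hl : IsAnnihilatingFactorization [a * a, b] :=
    .pair haa hb (by rw [mul_assoc, hab, mul_zero])
  have hl' : IsAnnihilatingFactorization [a, b] := .pair ha hb hab
  have h1 := H.span_mem_spanMultiset hl hl' (x := a * a) (by simp)
  have h2 := H.span_mem_spanMultiset hl' hl (x := a) (by simp)
  simp [spanMultiset] at h1 h2
  rcases h1 with h1 | h1
  · exact h1
  · rcases h2 with h2 | h2
    exacts [h2.symm, h1.trans h2.symm]

theorem exists_isIdempotentElem (H : HasUniqueAnnihilatingFactorizations R) {a b : R}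
    (ha : IsNnu a) (hb : IsNnu b) (hab : a * b = 0) :
    ∃ e : R, IsIdempotentElem e ∧ e ≠ 0 ∧ 1 - e ≠ 0 := by
  obtain ⟨s, hs⟩ : a * a ∣ a :=
    Ideal.span_singleton_le_span_singleton.1 (H.span_mul_self_eq ha hb hab).ge
  refine ⟨a * s, ?_, fun h => ha.1 ?_, fun h => ha.2 (IsUnit.of_mul_eq_one s ?_)⟩
  · calc a * s * (a * s) = a * a * s * s := by ring
      _ = a * s := by rw [← hs]
  · linear_combination hs + a * h
  · exact (sub_eq_zero.1 h).symm

theorem isMaximal_span (H : HasUniqueAnnihilatingFactorizations R) {e : R}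
    (he : IsIdempotentElem e) (he0 : e ≠ 0) (he1 : 1 - e ≠ 0) :
    (Ideal.span {e}).IsMaximal := by
  have hnnu : IsNnu e := isNnu_of_mul_eq_zero he0 he1 he.mul_one_sub_self
  have hnnu' : IsNnu (1 - e) := isNnu_of_mul_eq_zero he1 he0 he.one_sub_mul_self
  refine Ideal.isMaximal_iff.2 ⟨fun h1 => hnnu.2 ?_, fun J x heJ hx hxJ => ?_⟩
  · exact Ideal.span_singleton_eq_top.1 ((Ideal.eq_top_iff_one _).2 h1)
  -- Comparing `0 = x(1 - e) · e` with `0 = (1 - e) · e` makes `x` invertible modulo `(e)`.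
  have hx' : x * (1 - e) ≠ 0 := fun h =>
    hx (Ideal.mem_span_singleton'.2 ⟨x, by linear_combination -h⟩)
  have hxe : x * (1 - e) * e = 0 := by rw [mul_assoc, he.one_sub_mul_self, mul_zero]
  have hmem := H.span_mem_spanMultiset (.pair (isNnu_of_mul_eq_zero hx' he0 hxe) hnnu hxe)
    (.pair hnnu' hnnu he.one_sub_mul_self) (x := x * (1 - e)) (by simp)
  simp [spanMultiset] at hmem
  rcases hmem with h | h
  · obtain ⟨r, hr⟩ := Ideal.mem_span_singleton'.1 (h.ge (Ideal.mem_span_singleton_self _))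
    have h1 : (1 : R) = e + r * (1 - e) * x := by linear_combination -hr
    rw [h1]
    exact J.add_mem (heJ (Ideal.mem_span_singleton_self e)) (J.mul_mem_left _ hxJ)
  · refine absurd ?_ hx
    have := (Ideal.span {e}).add_mem (h.le (Ideal.mem_span_singleton_self _))
      ((Ideal.span {e}).mul_mem_left x (Ideal.mem_span_singleton_self e))
    rwa [← mul_add, sub_add_cancel, mul_one] at this

end HasUniqueAnnihilatingFactorizations

theorem exists_isNnu_mul_eq_zero_of_not_isDomain [Nontrivial R] (h : ¬IsDomain R) :
    ∃ a b : R, IsNnu a ∧ IsNnu b ∧ a * b = 0 := by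
  obtain ⟨a, b, hab, ha, hb⟩ : ∃ a b : R, a * b = 0 ∧ a ≠ 0 ∧ b ≠ 0 := by
    by_contra! hc
    exact h (@NoZeroDivisors.to_isDomain R _ _
      ⟨fun {a b} hab => or_iff_not_imp_left.2 (hc a b hab)⟩)
  exact ⟨a, b, isNnu_of_mul_eq_zero ha hb hab,
    isNnu_of_mul_eq_zero hb ha (by rwa [mul_comm]), hab⟩

theorem exists_ringEquiv_prod_fields {e : R} (he : IsIdempotentElem e)
    (hmax : (Ideal.span {e}).IsMaximal) (hmax' : (Ideal.span {1 - e}).IsMaximal) :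
    ∃ (K₁ K₂ : Type u) (fld₁ : Field K₁) (fld₂ : Field K₂),
      letI := fld₁
      letI := fld₂
      Nonempty (R ≃+* K₁ × K₂) :=
  ⟨_, _, Ideal.Quotient.field _, Ideal.Quotient.field _,
    ⟨(AlgEquiv.prodQuotientOfIsIdempotentElem ℤ he he.one_sub (add_sub_cancel e 1)
      he.mul_one_sub_self).toRingEquiv⟩⟩

theorem rAssoc_or_rAssoc_of_isNnu_prod {K₁ K₂ : Type*} [Field K₁] [Field K₂] {x : K₁ × K₂}
    (hx : IsNnu x) : RAssoc x (1, 0) ∨ RAssoc x (0, 1) := by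
  obtain ⟨hx0, hxu⟩ := hx
  have : x.1 = 0 ∨ x.2 = 0 := by
    by_contra! h
    exact hxu (Prod.isUnit_iff.2 ⟨h.1.isUnit, h.2.isUnit⟩)
  rcases this with h1 | h2
  · have h2 : x.2 ≠ 0 := fun h2 => hx0 (Prod.ext h1 h2)
    exact .inr (rAssoc_of_mul_eq (y := (0, x.2⁻¹)) (by ext <;> simp [h1])
      (by ext <;> simp [h1, h2]))
  · have h1 : x.1 ≠ 0 := fun h1 => hx0 (Prod.ext h1 h2)
    exact .inl (rAssoc_of_mul_eq (y := (x.1⁻¹, 0)) (by ext <;> simp [h2])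
      (by ext <;> simp [h1, h2]))

theorem exists_isIdempotentElem_of_ringEquiv_prod {K₁ K₂ : Type*} [Field K₁] [Field K₂]
    (f : R ≃+* K₁ × K₂) : ∃ e : R, IsIdempotentElem e ∧ e ≠ 0 ∧ 1 - e ≠ 0 ∧
      ∀ x, IsNnu x → RAssoc x e ∨ RAssoc x (1 - e) := by
  have h1e : f.symm (0, 1) = 1 - f.symm (1, 0) := by
    rw [eq_sub_iff_add_eq, ← map_add]
    simp
  refine ⟨f.symm (1, 0), ?_, by simp, by simp [← h1e], fun x hx => ?_⟩
  · rw [IsIdempotentElem, ← map_mul]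
    simp
  · have := rAssoc_or_rAssoc_of_isNnu_prod ((isNnu_map_iff f).2 hx)
    rwa [← f.apply_symm_apply (1, 0), ← f.apply_symm_apply (0, 1), rAssoc_map_iff,
      rAssoc_map_iff, h1e] at this

theorem spanMultiset_eq_of_isTauFact_zero {e : R} (he : IsIdempotentElem e) (he0 : e ≠ 0)
    (he1 : 1 - e ≠ 0) (hcls : ∀ x, IsNnu x → RAssoc x e ∨ RAssoc x (1 - e)) {u : Rˣ}
    {l : List R} (hl : IsTauFact τ_z u l 0) (hirr : ∀ x ∈ l, TauIrreducible τ_z x) :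
    spanMultiset l = {Ideal.span {e}, Ideal.span {1 - e}} :=
  have hpair := IsAnnihilatingFactorization.pair
    (isNnu_of_mul_eq_zero he0 he1 he.mul_one_sub_self)
    (isNnu_of_mul_eq_zero he1 he0 he.one_sub_mul_self) he.mul_one_sub_self
  (IsAnnihilatingFactorization.of_isTauFact_zero hl hirr
    hpair.not_tauIrreducible_zero).spanMultiset_eq he hcls

/-- For the relation `a τ_z b ↔ a * b = 0`: `R` is a τ_z-atomic-associate-UFR if and
only if `R` is an integral domain or `R` is isomorphic to a direct product of two
fields. -/
theorem tauZ_UFR_iff {R : Type u} [CommRing R] [Nontrivial R] :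
    (TauAtomic (fun x y : R => x * y = 0) ∧
      ∀ a : R, ¬IsUnit a → ∀ (u u' : Rˣ) (l l' : List R),
        IsTauFact (fun x y : R => x * y = 0) u l a →
        (∀ x ∈ l, TauIrreducible (fun x y : R => x * y = 0) x) →
        IsTauFact (fun x y : R => x * y = 0) u' l' a →
        (∀ x ∈ l', TauIrreducible (fun x y : R => x * y = 0) x) →
        Multiset.Rel RAssoc (↑l : Multiset R) (↑l' : Multiset R)) ↔
    (IsDomain R ∨ ∃ (K₁ K₂ : Type u) (fld₁ : Field K₁) (fld₂ : Field K₂),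
      letI := fld₁
      letI := fld₂
      Nonempty (R ≃+* K₁ × K₂)) := by
  refine ⟨fun ⟨_, huniq⟩ => ?_,
    fun h => ⟨tauAtomic_tauZ, fun a _ u u' l l' hl hirr hl' hirr' => ?_⟩⟩
  · have H : HasUniqueAnnihilatingFactorizations R := fun l l' hl hl' =>
      rel_rAssoc_iff_spanMultiset_eq.1 (huniq 0 not_isUnit_zero 1 1 l l' hl.isTauFact
        hl.tauIrreducible hl'.isTauFact hl'.tauIrreducible)
    refine or_iff_not_imp_left.2 fun hdom => ?_
    obtain ⟨a, b, ha, hb, hab⟩ := exists_isNnu_mul_eq_zero_of_not_isDomain hdom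
    obtain ⟨e, he, he0, he1⟩ := H.exists_isIdempotentElem ha hb hab
    exact exists_ringEquiv_prod_fields he (H.isMaximal_span he he0 he1)
      (H.isMaximal_span he.one_sub he1 (by rwa [sub_sub_cancel]))
  rw [rel_rAssoc_iff_spanMultiset_eq]
  by_cases ha : a = 0
  · subst ha
    rcases h with _ | ⟨K₁, K₂, _, _, ⟨f⟩⟩
    · rw [eq_singleton_zero_of_isTauFact_zero hl, eq_singleton_zero_of_isTauFact_zero hl']
    · obtain ⟨e, he, he0, he1, hcls⟩ := exists_isIdempotentElem_of_ringEquiv_prod f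
      rw [spanMultiset_eq_of_isTauFact_zero he he0 he1 hcls hl hirr,
        spanMultiset_eq_of_isTauFact_zero he he0 he1 hcls hl' hirr']
  · rw [spanMultiset_eq_of_isTauFact_of_ne_zero ha hl,
      spanMultiset_eq_of_isTauFact_of_ne_zero ha hl']
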